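/- If two positions satisfy a_2/a_1 irrational (with d_1, d_2 > 0, d_0 ≥ 0, not all frequencies rationally related), then the function g(H) = d_0 + 2d_1 cos(H a_1) + 2d_2 cos(H a_2) is not periodic: there is no T > 0 with g(H + T) = g(H) for all H. -/
import Mathlib


open Real

theorem irrational_ratio_not_periodic (a1 a2 d0 d1 d2 : ℝ)
    (ha1 : 0 < a1) (ha2 : 0 < a2) (hirr : Irrational (a2 / a1))
    (hd1 : 0 < d1) (hd2 : 0 < d2) (hd0 : 0 ≤ d0) :
    ¬ ∃ T : ℝ, 0 < T ∧ ∀ H : ℝ,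
      d0 + 2 * d1 * Real.cos ((H + T) * a1) + 2 * d2 * Real.cos ((H + T) * a2)
        = d0 + 2 * d1 * Real.cos (H * a1) + 2 * d2 * Real.cos (H * a2) := by
  rintro ⟨T, hT, hper⟩
  have h0 := hper 0
  simp only [zero_add, zero_mul, Real.cos_zero] at h0
  have hc1le : Real.cos (T * a1) ≤ 1 := Real.cos_le_one _
  have hc2le : Real.cos (T * a2) ≤ 1 := Real.cos_le_one _
  have hc1 : Real.cos (T * a1) = 1 := by nlinarith
  have hc2 : Real.cos (T * a2) = 1 := by nlinarith
  obtain ⟨k, hk⟩ := Real.cos_eq_one_iff (T * a1) |>.mp hc1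
  obtain ⟨m, hm⟩ := Real.cos_eq_one_iff (T * a2) |>.mp hc2
  have hpi : (0:ℝ) < 2 * π := by positivity
  have hk0 : (k:ℝ) ≠ 0 := by
    intro h
    rw [h, zero_mul] at hk
    nlinarith
  apply hirr
  refine ⟨(m : ℚ) / (k : ℚ), ?_⟩
  have hTa1 : T * a1 ≠ 0 := by positivity
  have : a2 / a1 = (T * a2) / (T * a1) := by
    field_simp
  rw [this, ← hk, ← hm]
  push_cast
  rw [div_eq_div_iff]
  · ring
  · exact hk0
  · exact mul_ne_zero hk0 (by positivity)
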